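/- arXiv:1612.08125 — 2 statements merged into one kernel-verified Lean document; each statement's English description precedes it below -/
import Mathlib

section
/- Let A be the associative ℂ-algebra of Definition above (generated by H, X₁^±, X₂^± with relations H X_i^± - X_i^± H = ±α_i X_i^±, X_i^+ X_i^- = p_i(H - α_i/2), X_i^- X_i^+ = p_i(H + α_i/2), X₁⁺X₂⁻ = X₂⁻X₁⁺, X₁⁻X₂⁺ = X₂⁺X₁⁻). If H is algebraically independent over ℂ in A (i.e., f(H) = 0 implies f = 0 for f ∈ ℂ[u]), then the Mazorchuk–Turowska equation p₁(u + α₂/2)p₂(u + α₁/2) = p₁(u - α₂/2)p₂(u - α₁/2) holds in ℂ[u]. -/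
open Polynomial

private lemma shiftshift (f : ℂ[X]) (a b : ℂ) :
    (f.comp (X + C a)).comp (X + C b) = f.comp (X + C (a + b)) := by
  rw [comp_assoc]
  simp [add_comp, C_add]
  ring_nf

private lemma moveL {A : Type*} [Ring A] [Algebra ℂ A] (H Y : A) (c : ℂ)
    (h : Y * H = (H + algebraMap ℂ A c) * Y) (f : ℂ[X]) :
    Y * aeval H f = aeval H (f.comp (X + C c)) * Y := by
  induction f using Polynomial.induction_on with
  | C a => simp [Algebra.commutes]
  | add p q hp hq => simp only [map_add, add_comp, mul_add, add_mul, hp, hq]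
  | monomial n a ih =>
    have e1 : aeval H (C a * X ^ (n + 1)) = aeval H (C a * X ^ n) * H := by
      simp [pow_succ, mul_assoc]
    have e2 : ((C a : ℂ[X]) * X ^ (n + 1)).comp (X + C c) =
        (C a * X ^ n).comp (X + C c) * (X + C c) := by
      simp [pow_succ, mul_comp, mul_assoc]
    have e3 : aeval H ((C a * X ^ n).comp (X + C c) * (X + C c)) =
        aeval H ((C a * X ^ n).comp (X + C c)) * (H + algebraMap ℂ A c) := by simp
    rw [e1, e2, e3, ← mul_assoc, ih, mul_assoc, h, ← mul_assoc]

/-- If in an algebra with the noncommutative Kleinian fiber product relations the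
element H is algebraically independent over ℂ, then the Mazorchuk–Turowska equation
p₁(u + α₂/2)p₂(u + α₁/2) = p₁(u - α₂/2)p₂(u - α₁/2) holds in ℂ[u]. -/
theorem stmt_6 {A : Type*} [Ring A] [Algebra ℂ A]
    (α₁ α₂ : ℂ) (p₁ p₂ : ℂ[X])
    (H X1p X1m X2p X2m : A)
    (h1p : H * X1p - X1p * H = algebraMap ℂ A α₁ * X1p)
    (h1m : H * X1m - X1m * H = -(algebraMap ℂ A α₁) * X1m)
    (h2p : H * X2p - X2p * H = algebraMap ℂ A α₂ * X2p)
    (h2m : H * X2m - X2m * H = -(algebraMap ℂ A α₂) * X2m)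
    (hpm1 : X1p * X1m = aeval (H - algebraMap ℂ A (α₁/2)) p₁)
    (hmp1 : X1m * X1p = aeval (H + algebraMap ℂ A (α₁/2)) p₁)
    (hpm2 : X2p * X2m = aeval (H - algebraMap ℂ A (α₂/2)) p₂)
    (hmp2 : X2m * X2p = aeval (H + algebraMap ℂ A (α₂/2)) p₂)
    (hc1 : X1p * X2m = X2m * X1p)
    (hc2 : X1m * X2p = X2p * X1m)
    (hind : ∀ f : ℂ[X], aeval H f = 0 → f = 0) :
    p₁.comp (X + C (α₂/2)) * p₂.comp (X + C (α₁/2)) =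
      p₁.comp (X - C (α₂/2)) * p₂.comp (X - C (α₁/2)) := by
  -- weight relations in "move" form
  have hm1 : X1m * H = (H + algebraMap ℂ A α₁) * X1m := by
    have h := sub_eq_iff_eq_add.mp h1m
    rw [add_mul, h, neg_mul]
    abel
  have hm2 : X2m * H = (H + algebraMap ℂ A α₂) * X2m := by
    have h := sub_eq_iff_eq_add.mp h2m
    rw [add_mul, h, neg_mul]
    abel
  have mv1 := moveL H X1m α₁ hm1
  have mv2 := moveL H X2m α₂ hm2
  have key : ∀ (c : ℂ) (p : ℂ[X]),
      aeval (H + algebraMap ℂ A c) p = aeval H (p.comp (X + C c)) := by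
    intro c p
    rw [aeval_comp]
    simp
  -- product relations in shifted-polynomial form
  have h1 : X1m * X1p = aeval H (p₁.comp (X + C (α₁/2))) := by rw [hmp1, key]
  have h2' : X1p * X1m = aeval H (p₁.comp (X + C (-(α₁/2)))) := by
    rw [hpm1, ← key, map_neg, ← sub_eq_add_neg]
  have h3 : X2m * X2p = aeval H (p₂.comp (X + C (α₂/2))) := by rw [hmp2, key]
  set q1 : ℂ[X] := p₁.comp (X + C (α₁/2)) with hq1def
  set q1' : ℂ[X] := p₁.comp (X + C (-(α₁/2))) with hq1'def
  set q2 : ℂ[X] := p₂.comp (X + C (α₂/2)) with hq2def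
  set r1 : ℂ[X] := (q1'.comp (X + C α₂)).comp (X + C α₁) with hr1def
  set r2 : ℂ[X] := q2.comp (X + C α₁) with hr2def
  -- Evaluate E two ways
  have hB : X1m * (X2m * (X1p * (X2p * aeval H q1))) = aeval H (q1 * (q2 * q1)) := by
    calc X1m * (X2m * (X1p * (X2p * aeval H q1)))
        = X1m * ((X2m * X1p) * (X2p * aeval H q1)) := by simp only [mul_assoc]
      _ = X1m * ((X1p * X2m) * (X2p * aeval H q1)) := by rw [hc1]
      _ = (X1m * X1p) * ((X2m * X2p) * aeval H q1) := by simp only [mul_assoc]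
      _ = aeval H q1 * (aeval H q2 * aeval H q1) := by rw [h1, h3]
      _ = aeval H (q1 * (q2 * q1)) := by simp only [map_mul]
  have hA : X1m * (X2m * (X1p * (X2p * aeval H q1))) = aeval H (r1 * (r2 * q1)) := by
    calc X1m * (X2m * (X1p * (X2p * aeval H q1)))
        = X1m * (X2m * (X1p * (X2p * (X1m * X1p)))) := by rw [h1]
      _ = X1m * (X2m * (X1p * ((X2p * X1m) * X1p))) := by simp only [mul_assoc]
      _ = X1m * (X2m * (X1p * ((X1m * X2p) * X1p))) := by rw [hc2]
      _ = X1m * (X2m * ((X1p * X1m) * (X2p * X1p))) := by simp only [mul_assoc]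
      _ = X1m * ((X2m * aeval H q1') * (X2p * X1p)) := by
          rw [h2']; simp only [mul_assoc]
      _ = (X1m * aeval H (q1'.comp (X + C α₂))) * (X2m * (X2p * X1p)) := by
          rw [mv2]; simp only [mul_assoc]
      _ = aeval H r1 * (X1m * ((X2m * X2p) * X1p)) := by
          rw [mv1, hr1def]; simp only [mul_assoc]
      _ = aeval H r1 * ((X1m * aeval H q2) * X1p) := by
          rw [h3]; simp only [mul_assoc]
      _ = aeval H r1 * (aeval H r2 * (X1m * X1p)) := by
          rw [mv1, hr2def]; simp only [mul_assoc]
      _ = aeval H (r1 * (r2 * q1)) := by rw [h1]; simp only [map_mul]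
  -- injectivity
  have hpoly : q1 * (q2 * q1) = r1 * (r2 * q1) := by
    have h0 : aeval H (q1 * (q2 * q1) - r1 * (r2 * q1)) = 0 := by
      rw [map_sub, ← hB, ← hA, sub_self]
    exact sub_eq_zero.mp (hind _ h0)
  -- handle p₁ = 0
  by_cases hp0 : p₁ = 0
  · simp [hp0]
  -- cancel q1
  have hq1ne : q1 ≠ 0 := by
    intro h
    apply hp0
    have := congrArg (fun f => f.comp (X + C (-(α₁/2)))) h
    simp only [hq1def, shiftshift, zero_comp] at this
    rw [show α₁/2 + -(α₁/2) = 0 from by ring] at this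
    simpa using this
  have hQ : q1 * q2 = r1 * r2 := by
    apply mul_right_cancel₀ hq1ne
    rw [mul_assoc, mul_assoc, hpoly]
  -- identify r1, r2 as shifts of p₁, p₂
  have hr1 : r1 = p₁.comp (X + C (α₁/2 + α₂)) := by
    rw [hr1def, hq1'def, shiftshift, shiftshift,
      show -(α₁/2) + (α₂ + α₁) = α₁/2 + α₂ from by ring]
  have hr2 : r2 = p₂.comp (X + C (α₂/2 + α₁)) := by
    rw [hr2def, hq2def, shiftshift]
  rw [hr1, hr2, hq1def, hq2def] at hQ
  -- shift hQ by -(α₁+α₂)/2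
  have := congrArg (fun f => f.comp (X + C (-(α₁/2) - α₂/2))) hQ
  simp only [mul_comp, shiftshift] at this
  rw [show α₁/2 + (-(α₁/2) - α₂/2) = -(α₂/2) from by ring,
    show α₂/2 + (-(α₁/2) - α₂/2) = -(α₁/2) from by ring,
    show α₁/2 + α₂ + (-(α₁/2) - α₂/2) = α₂/2 from by ring,
    show α₂/2 + α₁ + (-(α₁/2) - α₂/2) = α₁/2 from by ring] at this
  rw [show (X - C (α₂/2) : ℂ[X]) = X + C (-(α₂/2)) from by rw [map_neg, sub_eq_add_neg],
    show (X - C (α₁/2) : ℂ[X]) = X + C (-(α₁/2)) from by rw [map_neg, sub_eq_add_neg]]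
  exact this.symm
end

section
/- Sequence counting lemma: let Seq₂(m,n) denote binary sequences with m ones and n twos. If k ≥ 2 and j ∈ Seq₂(km, kn) with gcd(m,n) = 1 and m + n ≥ 1, then j can be written as j = j' i j'' where i ∈ Seq₂(m,n) is a contiguous subsequence of length m + n and the concatenation j'j'' ∈ Seq₂((k-1)m, (k-1)n). (Cyclic reducibility: some window of length m+n in the sequence contains exactly m ones and n twos.) -/
/-!
Cut the sequence into `k` consecutive blocks of length `m + n`. Their numbers of ones add up to
`k * m`, so one block has at most `m` ones and another at least `m`. Sliding a window of length
`m + n` from one block to the other changes its number of ones by at most one at each step, so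
some window in between has exactly `m` ones, hence `n` twos; removing it leaves the rest.
-/

theorem Nat.exists_eq_of_step_le_one {f : ℕ → ℕ}
    (hf : ∀ p, f (p + 1) ≤ f p + 1 ∧ f p ≤ f (p + 1) + 1) {a b c : ℕ}
    (hc : min (f a) (f b) ≤ c ∧ c ≤ max (f a) (f b)) :
    ∃ p, min a b ≤ p ∧ p ≤ max a b ∧ f p = c := by
  wlog hab : a ≤ b generalizing a b
  · rw [min_comm (f a), max_comm (f a)] at hc
    simpa only [min_comm, max_comm] using this hc (by omega)
  rw [min_eq_left hab, max_eq_right hab]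
  induction b, hab using Nat.le_induction with
  | base => exact ⟨a, le_rfl, le_rfl, by omega⟩
  | succ b hab ih =>
    by_cases hcb : min (f a) (f b) ≤ c ∧ c ≤ max (f a) (f b)
    · obtain ⟨p, hap, hpb, hp⟩ := ih hcb
      exact ⟨p, hap, hpb.trans b.le_succ, hp⟩
    · exact ⟨b + 1, hab.trans b.le_succ, le_rfl, by have := hf b; omega⟩

namespace List

variable {α : Type*} [BEq α] (l : List α) (a : α)

theorem count_take_add (p w : ℕ) :
    (l.take (p + w)).count a = (l.take p).count a + ((l.drop p).take w).count a := by
  rw [take_add, count_append]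

theorem count_window_succ_le (p w : ℕ) :
    ((l.drop (p + 1)).take w).count a ≤ ((l.drop p).take w).count a + 1 ∧
      ((l.drop p).take w).count a ≤ ((l.drop (p + 1)).take w).count a + 1 := by
  have hstep : ∀ q, ((l.drop q).take 1).count a ≤ 1 := fun q =>
    count_le_length.trans (length_take_le _ _)
  have := count_take_add l a p w
  have := count_take_add l a (p + 1) w
  have := count_take_add l a p 1
  have := count_take_add l a (p + w) 1
  have := hstep p
  have := hstep (p + w)
  rw [show p + 1 + w = p + w + 1 by ring] at *
  omega

theorem sum_count_blocks (w k : ℕ) :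
    ∑ t ∈ Finset.range k, ((l.drop (t * w)).take w).count a = (l.take (k * w)).count a := by
  induction k with
  | zero => simp
  | succ k ih => rw [Finset.sum_range_succ, ih, Nat.succ_mul, count_take_add]

theorem exists_window_count_eq {k w m : ℕ} (hk : 0 < k) (hlen : l.length = k * w)
    (hcount : l.count a = k * m) :
    ∃ l₁ i l₂, l = l₁ ++ i ++ l₂ ∧ i.length = w ∧ i.count a = m := by
  set C : ℕ → ℕ := fun p => ((l.drop p).take w).count a
  have hsum : ∑ t ∈ Finset.range k, C (t * w) = ∑ _t ∈ Finset.range k, m := by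
    simp only [C, sum_count_blocks, ← hlen, take_length, hcount, Finset.sum_const,
      Finset.card_range, smul_eq_mul]
  have hne : (Finset.range k).Nonempty := Finset.nonempty_range_iff.mpr hk.ne'
  obtain ⟨t₁, ht₁, hle⟩ := Finset.exists_le_of_sum_le hne hsum.le
  obtain ⟨t₂, ht₂, hge⟩ := Finset.exists_le_of_sum_le hne hsum.ge
  rw [Finset.mem_range] at ht₁ ht₂
  obtain ⟨p, -, hp, hCp⟩ := Nat.exists_eq_of_step_le_one (f := C)
    (fun p => count_window_succ_le l a p w) ⟨min_le_of_left_le hle, le_max_of_le_right hge⟩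
  have hblock : ∀ t < k, t * w + w ≤ k * w := fun t ht => by
    rw [← Nat.succ_mul]; exact Nat.mul_le_mul_right w ht
  have hpw : p + w ≤ l.length := by
    have := hblock t₁ ht₁; have := hblock t₂ ht₂; omega
  refine ⟨l.take p, (l.drop p).take w, (l.drop p).drop w, ?_, ?_, hCp⟩
  · rw [append_assoc, take_append_drop, take_append_drop]
  · simp only [length_take, length_drop]; omega

end List

theorem stmt_19_general (m n k : ℕ) (hk : 2 ≤ k)
    (j : List Bool) (h1 : j.count true = k * m) (h2 : j.count false = k * n) :
    ∃ j' i j'' : List Bool, j = j' ++ i ++ j'' ∧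
      i.count true = m ∧ i.count false = n ∧
      (j' ++ j'').count true = (k - 1) * m ∧ (j' ++ j'').count false = (k - 1) * n := by
  have hlen : j.length = k * (m + n) := by
    rw [← j.count_true_add_count_false, h1, h2, mul_add]
  obtain ⟨j', i, j'', rfl, hi, hi1⟩ := j.exists_window_count_eq true (by omega) hlen h1
  have hi2 : i.count false = n := by
    have := i.count_true_add_count_false; omega
  simp only [List.count_append] at h1 h2 ⊢
  refine ⟨j', i, j'', rfl, hi1, hi2, ?_, ?_⟩ <;> rw [Nat.sub_one_mul] <;> omega

/-- Cyclic reducibility of binary sequences: a sequence with km ones and kn twos (k ≥ 2,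
gcd(m,n) = 1, m + n ≥ 1) contains a contiguous window with exactly m ones and n twos,
whose removal leaves a sequence with (k-1)m ones and (k-1)n twos. Ones are encoded by
`true` and twos by `false`. -/
theorem stmt_19 (m n k : ℕ) (hk : 2 ≤ k) (hcop : Nat.Coprime m n) (hmn : 1 ≤ m + n)
    (j : List Bool) (h1 : j.count true = k * m) (h2 : j.count false = k * n) :
    ∃ j' i j'' : List Bool, j = j' ++ i ++ j'' ∧
      i.count true = m ∧ i.count false = n ∧
      (j' ++ j'').count true = (k - 1) * m ∧ (j' ++ j'').count false = (k - 1) * n :=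
  stmt_19_general m n k hk j h1 h2
end
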